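/- Let j^{(0)}, j^{(1)}, …, j^{(n+1)} be distinct elements of S such that the (n+1)×(n+1) real matrix M with entries M_{α,p} = j^{(p)}_α − j^{(0)}_α (α, p = 1,…,n+1) is invertible, and let x ∈ ℝ^{n+1} satisfy l_{v,j^{(0)}}(x) = l_{v,j^{(1)}}(x) = … = l_{v,j^{(n+1)}}(x) > l_{v,k}(x) for all other k ∈ S (x is a vertex of Π_v). Let b ∈ (ℂ∖{0})^{n+1} satisfy Σ_{p=0}^{n+1} b^{j^{(p)}} = 0. Then there exists α ∈ {1,…,n+1} with Σ_{p=1}^{n+1} (j^{(p)}_α − j^{(0)}_α) b^{j^{(p)}} ≠ 0, and for any such α, along the ray z(t): lim_{t→+∞} (t^{−v(j^{(0)})} z(t)^{j^{(0)}}) / (z(t)_α · ∂f_t/∂z_α(z(t))) = b^{j^{(0)}} / Σ_{p=1}^{n+1} (j^{(p)}_α − j^{(0)}_α) b^{j^{(p)}}. -/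

import Mathlib

/-!
On the ray `z(t)_β = t^{x_β} b_β` the monomial `t^{-v(k)} z(t)^k` equals `t^{l_{v,k}(x)} b^k`, and
the Euler operator `z_α ∂/∂z_α` multiplies it by `k_α`. Dividing numerator and denominator by
`t^{l_{v,j⁰}(x)}`, every monomial of `S` outside the simplex decays, since `x` is a vertex, and
the simplex contributes `Σ_p j^{(p)}_α b^{j^{(p)}}`, which equals `Σ_p (j^{(p)}_α - j^{(0)}_α) b^{j^{(p)}}`
because `Σ_p b^{j^{(p)}} = 0`. Such an `α` exists because `M` is invertible and the vector
`(b^{j^{(p)}})_p` is nonzero.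
-/

open Filter Finset Topology

section Monomials

variable {ι : Type*} [Fintype ι]

lemma ofReal_rpow_mul_prod_ray {t : ℝ} (ht : 0 < t) (c : ℝ) (x : ι → ℝ) (b : ι → ℂ)
    (k : ι → ℤ) :
    ((t ^ c : ℝ) : ℂ) * ∏ β, (((t ^ x β : ℝ) : ℂ) * b β) ^ k β
      = ((t ^ (∑ β, (k β : ℝ) * x β + c) : ℝ) : ℂ) * ∏ β, b β ^ k β := by
  have hfactor : ∀ β, (((t ^ x β : ℝ) : ℂ) * b β) ^ k β
      = ((t ^ ((k β : ℝ) * x β) : ℝ) : ℂ) * b β ^ k β := fun β => by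
    rw [mul_zpow, ← Complex.ofReal_zpow, ← Real.rpow_intCast, ← Real.rpow_mul ht.le,
      mul_comm (x β)]
  rw [prod_congr rfl fun β _ => hfactor β, prod_mul_distrib, ← mul_assoc,
    ← Complex.ofReal_prod, ← Real.rpow_sum_of_pos ht, ← Complex.ofReal_mul,
    ← Real.rpow_add ht, add_comm c]

variable [DecidableEq ι]

lemma prod_update_zpow (z : ι → ℂ) (α : ι) (w : ℂ) (k : ι → ℤ) :
    ∏ β, Function.update z α w β ^ k β = w ^ k α * ∏ β ∈ univ.erase α, z β ^ k β := by
  simp_rw [Function.apply_update (fun β (u : ℂ) => u ^ k β) z α w]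
  rw [prod_update_of_mem (mem_univ α), sdiff_singleton_eq_erase]

lemma hasDerivAt_prod_update_zpow (z : ι → ℂ) {α : ι} (hz : z α ≠ 0) (k : ι → ℤ) :
    HasDerivAt (fun w => ∏ β, Function.update z α w β ^ k β)
      (k α * z α ^ (k α - 1) * ∏ β ∈ univ.erase α, z β ^ k β) (z α) := by
  simp_rw [prod_update_zpow]
  exact (hasDerivAt_zpow (k α) (z α) (Or.inl hz)).mul_const _

lemma mul_deriv_sum_prod_update_zpow (S : Finset (ι → ℤ)) (c : (ι → ℤ) → ℂ) (z : ι → ℂ)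
    {α : ι} (hz : z α ≠ 0) :
    z α * deriv (fun w => ∑ k ∈ S, c k * ∏ β, Function.update z α w β ^ k β) (z α)
      = ∑ k ∈ S, c k * (k α * ∏ β, z β ^ k β) := by
  rw [(HasDerivAt.fun_sum fun k _ =>
    (hasDerivAt_prod_update_zpow z hz k).const_mul (c k)).deriv, mul_sum]
  refine sum_congr rfl fun k _ => ?_
  have hpow : z α * z α ^ (k α - 1) = z α ^ k α := by
    rw [← zpow_one_add₀ hz, add_sub_cancel]
  rw [← mul_prod_erase univ (fun β => z β ^ k β) (mem_univ α), ← hpow]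
  ring

end Monomials

lemma exists_sum_ofReal_mul_ne_zero {ι : Type*} [Fintype ι] [DecidableEq ι]
    {M : Matrix ι ι ℝ} (hM : IsUnit M) {c : ι → ℂ} (hc : c ≠ 0) :
    ∃ α, ∑ p, (M α p : ℂ) * c p ≠ 0 := by
  have hMc : IsUnit (M.map Complex.ofRealHom) := hM.map Complex.ofRealHom.mapMatrix
  by_contra! h
  refine hc (Matrix.mulVec_injective_iff_isUnit.2 hMc ?_)
  ext α
  simpa [Matrix.mulVec, dotProduct] using h α

lemma tendsto_sum_ofReal_rpow_sub_mul {ι : Type*} (S : Finset ι) (e : ι → ℝ) (a : ι → ℂ)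
    {L : ℝ} (he : ∀ k ∈ S, e k ≤ L) :
    Tendsto (fun t : ℝ => ∑ k ∈ S, ((t ^ (e k - L) : ℝ) : ℂ) * a k) atTop
      (𝓝 (∑ k ∈ S with e k = L, a k)) := by
  rw [sum_filter]
  refine tendsto_finsetSum _ fun k hk => ?_
  rcases (he k hk).eq_or_lt with hkL | hkL
  · simp [hkL]
  · have hdecay : Tendsto (fun t : ℝ => t ^ (e k - L)) atTop (𝓝 0) := by
      simpa using tendsto_rpow_neg_atTop (y := L - e k) (by linarith)
    simpa [hkL.ne] using ((Complex.continuous_ofReal.tendsto 0).comp hdecay).mul_const (a k)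

lemma ofReal_rpow_mul_div_sum {ι : Type*} (S : Finset ι) (e : ι → ℝ) (a : ι → ℂ) (c : ℂ)
    {t : ℝ} (ht : 0 < t) (L : ℝ) :
    ((t ^ L : ℝ) : ℂ) * c / ∑ k ∈ S, ((t ^ e k : ℝ) : ℂ) * a k
      = c / ∑ k ∈ S, ((t ^ (e k - L) : ℝ) : ℂ) * a k := by
  have hsplit : ∀ k, ((t ^ e k : ℝ) : ℂ) = ((t ^ L : ℝ) : ℂ) * ((t ^ (e k - L) : ℝ) : ℂ) :=
    fun k => by rw [← Complex.ofReal_mul, ← Real.rpow_add ht, add_sub_cancel]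
  simp_rw [hsplit, mul_assoc, ← mul_sum]
  exact mul_div_mul_left _ _ (Complex.ofReal_ne_zero.2 (Real.rpow_pos_of_pos ht L).ne')

lemma sum_succ_sub_mul_eq_sum_mul {R : Type*} [CommRing R] {m : ℕ} (a w : Fin (m + 1) → R)
    (hw : ∑ p, w p = 0) :
    ∑ p : Fin m, (a p.succ - a 0) * w p.succ = ∑ p, a p * w p := by
  rw [Fin.sum_univ_succ] at hw
  simp only [Fin.sum_univ_succ (fun p => a p * w p), sub_mul, sum_sub_distrib, ← mul_sum]
  linear_combination (-a 0) * hw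

lemma forall_le_and_filter_eq_image {κ ι : Type*} [DecidableEq κ] [Fintype ι] {S : Finset κ}
    {g : κ → ℝ} {j : ι → κ} {L : ℝ} (hjS : ∀ p, j p ∈ S) (hj : ∀ p, g (j p) = L)
    (hlt : ∀ k ∈ S, (∀ p, k ≠ j p) → g k < L) :
    (∀ k ∈ S, g k ≤ L) ∧ {k ∈ S | g k = L} = univ.image j := by
  refine ⟨fun k hk => ?_, ?_⟩
  · by_cases hout : ∀ p, k ≠ j p
    · exact (hlt k hk hout).le
    · push Not at hout
      obtain ⟨p, rfl⟩ := hout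
      exact (hj p).le
  · ext k
    simp only [mem_filter, mem_image, mem_univ, true_and]
    refine ⟨fun ⟨hk, hkL⟩ => ?_, fun ⟨p, hp⟩ => hp ▸ ⟨hjS p, hj p⟩⟩
    by_contra! hout
    exact (hlt k hk fun p hp => hout p hp.symm).ne hkL

lemma ray_quotient_eq {ι : Type*} [Fintype ι] [DecidableEq ι] (S : Finset (ι → ℤ))
    {v : (ι → ℤ) → ℝ} {l : (ι → ℤ) → (ι → ℝ) → ℝ}
    (hl : ∀ k y, l k y = ∑ β, (k β : ℝ) * y β - v k) {x : ι → ℝ} {b : ι → ℂ} {α : ι}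
    (hb : b α ≠ 0) (k₀ : ι → ℤ) {t : ℝ} (ht : 0 < t) {z : ι → ℂ}
    (hz : ∀ β, z β = ((t ^ x β : ℝ) : ℂ) * b β) :
    (((t ^ (-v k₀) : ℝ) : ℂ) * ∏ β, z β ^ k₀ β) /
        (z α * deriv (fun w => ∑ k ∈ S, ((t ^ (-v k) : ℝ) : ℂ) *
          ∏ β, Function.update z α w β ^ k β) (z α))
      = (∏ β, b β ^ k₀ β) /
          ∑ k ∈ S, ((t ^ (l k x - l k₀ x) : ℝ) : ℂ) * (k α * ∏ β, b β ^ k β) := by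
  have hmono : ∀ k, ((t ^ (-v k) : ℝ) : ℂ) * ∏ β, z β ^ k β
      = ((t ^ l k x : ℝ) : ℂ) * ∏ β, b β ^ k β := fun k => by
    simp only [hz, ofReal_rpow_mul_prod_ray ht, hl, sub_eq_add_neg]
  have hzα : z α ≠ 0 := hz α ▸ mul_ne_zero (by exact_mod_cast (Real.rpow_pos_of_pos ht _).ne') hb
  rw [hmono, mul_deriv_sum_prod_update_zpow S _ z hzα,
    ← ofReal_rpow_mul_div_sum S (l · x) _ _ ht]
  refine congrArg _ (sum_congr rfl fun k _ => ?_)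
  conv_lhs => rw [mul_left_comm, hmono]
  ring

theorem vertex_residue_quotient_limit_general (n : ℕ)
    (S : Finset (Fin (n + 1) → ℤ))
    (v : (Fin (n + 1) → ℤ) → ℝ)
    (l : (Fin (n + 1) → ℤ) → (Fin (n + 1) → ℝ) → ℝ)
    (hl : ∀ j x, l j x = ∑ α, (j α : ℝ) * x α - v j)
    (f : ℝ → (Fin (n + 1) → ℂ) → ℂ)
    (hf : ∀ t z, f t z = ∑ j ∈ S, ((t ^ (-(v j)) : ℝ) : ℂ) * ∏ α, z α ^ (j α))
    (pd : ℝ → Fin (n + 1) → (Fin (n + 1) → ℂ) → ℂ)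
    (hpd : ∀ t α z, pd t α z = deriv (fun w => f t (Function.update z α w)) (z α))
    (j : Fin (n + 2) → (Fin (n + 1) → ℤ))
    (hjinj : Function.Injective j)
    (hjS : ∀ p, j p ∈ S)
    (M : Matrix (Fin (n + 1)) (Fin (n + 1)) ℝ)
    (hM : ∀ α p, M α p = ((j p.succ α - j 0 α : ℤ) : ℝ))
    (hMinv : IsUnit M)
    (x : Fin (n + 1) → ℝ)
    (hvertex : (∀ p, l (j p) x = l (j 0) x) ∧
      ∀ k ∈ S, (∀ p, k ≠ j p) → l k x < l (j 0) x)
    (b : Fin (n + 1) → ℂ) (hb : ∀ α, b α ≠ 0)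
    (hbsum : ∑ p : Fin (n + 2), ∏ β, b β ^ (j p β) = 0)
    (zr : ℝ → Fin (n + 1) → ℂ)
    (hz : ∀ t β, zr t β = ((t ^ (x β) : ℝ) : ℂ) * b β) :
    (∃ α, ∑ p : Fin (n + 1),
        ((j p.succ α - j 0 α : ℤ) : ℂ) * ∏ β, b β ^ (j p.succ β) ≠ 0) ∧
    (∀ α, (∑ p : Fin (n + 1),
        ((j p.succ α - j 0 α : ℤ) : ℂ) * ∏ β, b β ^ (j p.succ β)) ≠ 0 →
      Tendsto (fun t : ℝ =>
          (((t ^ (-(v (j 0))) : ℝ) : ℂ) * ∏ β, zr t β ^ (j 0 β)) / (zr t α * pd t α (zr t)))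
        atTop (nhds ((∏ β, b β ^ (j 0 β)) /
          ∑ p : Fin (n + 1), ((j p.succ α - j 0 α : ℤ) : ℂ) * ∏ β, b β ^ (j p.succ β)))) := by
  obtain rfl : pd = fun t α z => deriv (fun w => f t (Function.update z α w)) (z α) :=
    funext₃ hpd
  obtain rfl : f = fun t z => ∑ k ∈ S, ((t ^ (-v k) : ℝ) : ℂ) * ∏ β, z β ^ k β := funext₂ hf
  refine ⟨?_, fun α hα => ?_⟩
  · have hc : (fun p : Fin (n + 1) => ∏ β, b β ^ j p.succ β) ≠ 0 :=
      Function.ne_iff.2 ⟨0, prod_ne_zero_iff.2 fun β _ => zpow_ne_zero _ (hb β)⟩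
    obtain ⟨α, hα⟩ := exists_sum_ofReal_mul_ne_zero hMinv hc
    exact ⟨α, by simpa only [hM, Complex.ofReal_intCast] using hα⟩
  obtain ⟨hbelow, hsimplex⟩ := forall_le_and_filter_eq_image hjS hvertex.1 hvertex.2
  have hlim := tendsto_sum_ofReal_rpow_sub_mul S (l · x) (fun k => (k α : ℂ) * ∏ β, b β ^ k β)
    hbelow
  rw [hsimplex, sum_image hjinj.injOn, ← sum_succ_sub_mul_eq_sum_mul _ _ hbsum] at hlim
  push_cast
  refine (tendsto_const_nhds.div hlim (by exact_mod_cast hα)).congr' ?_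
  filter_upwards [eventually_gt_atTop 0] with t ht
  exact (ray_quotient_eq S hl (hb α) (j 0) ht (hz t)).symm

/-- At a vertex `x` of `Π_v` dual to the simplex with vertices
`j⁰, j¹, …, j^{n+1} ∈ S` (the matrix `M_{α,p} = j^{(p)}_α - j^{(0)}_α` being invertible), if
`b ∈ (ℂ∖{0})^{n+1}` satisfies `Σ_{p=0}^{n+1} b^{j^{(p)}} = 0`, then some index `α` has
`Σ_{p=1}^{n+1} (j^{(p)}_α - j^{(0)}_α) b^{j^{(p)}} ≠ 0`, and for any such `α`, along the ray
`z(t)_β = t^{x_β} b_β` one has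
`(t^{-v(j⁰)} z(t)^{j⁰}) / (z(t)_α ∂f_t/∂z_α(z(t))) → b^{j⁰} / Σ_{p=1}^{n+1} (j^{(p)}_α - j^{(0)}_α) b^{j^{(p)}}`. -/
theorem vertex_residue_quotient_limit (n : ℕ) (hn : 1 ≤ n)
    (S : Finset (Fin (n + 1) → ℤ)) (hS : S.Nonempty)
    (v : (Fin (n + 1) → ℤ) → ℝ)
    (l : (Fin (n + 1) → ℤ) → (Fin (n + 1) → ℝ) → ℝ)
    (hl : ∀ j x, l j x = ∑ α, (j α : ℝ) * x α - v j)
    (f : ℝ → (Fin (n + 1) → ℂ) → ℂ)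
    (hf : ∀ t z, f t z = ∑ j ∈ S, ((t ^ (-(v j)) : ℝ) : ℂ) * ∏ α, z α ^ (j α))
    (pd : ℝ → Fin (n + 1) → (Fin (n + 1) → ℂ) → ℂ)
    (hpd : ∀ t α z, pd t α z = deriv (fun w => f t (Function.update z α w)) (z α))
    (j : Fin (n + 2) → (Fin (n + 1) → ℤ))
    (hjinj : Function.Injective j)
    (hjS : ∀ p, j p ∈ S)
    (M : Matrix (Fin (n + 1)) (Fin (n + 1)) ℝ)
    (hM : ∀ α p, M α p = ((j p.succ α - j 0 α : ℤ) : ℝ))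
    (hMinv : IsUnit M)
    (x : Fin (n + 1) → ℝ)
    (hvertex : (∀ p, l (j p) x = l (j 0) x) ∧
      ∀ k ∈ S, (∀ p, k ≠ j p) → l k x < l (j 0) x)
    (b : Fin (n + 1) → ℂ) (hb : ∀ α, b α ≠ 0)
    (hbsum : ∑ p : Fin (n + 2), ∏ β, b β ^ (j p β) = 0)
    (zr : ℝ → Fin (n + 1) → ℂ)
    (hz : ∀ t β, zr t β = ((t ^ (x β) : ℝ) : ℂ) * b β) :
    (∃ α, ∑ p : Fin (n + 1),
        ((j p.succ α - j 0 α : ℤ) : ℂ) * ∏ β, b β ^ (j p.succ β) ≠ 0) ∧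
    (∀ α, (∑ p : Fin (n + 1),
        ((j p.succ α - j 0 α : ℤ) : ℂ) * ∏ β, b β ^ (j p.succ β)) ≠ 0 →
      Tendsto (fun t : ℝ =>
          (((t ^ (-(v (j 0))) : ℝ) : ℂ) * ∏ β, zr t β ^ (j 0 β)) / (zr t α * pd t α (zr t)))
        atTop (nhds ((∏ β, b β ^ (j 0 β)) /
          ∑ p : Fin (n + 1), ((j p.succ α - j 0 α : ℤ) : ℂ) * ∏ β, b β ^ (j p.succ β)))) :=
  vertex_residue_quotient_limit_general n S v l hl f hf pd hpd j hjinj hjS M hM hMinv x hvertex b hb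
    hbsum zr hz
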